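/- Let f be a continuous circle map without periodic points, and let P be a minimal set of f. Then P is disjoint from Con(f), the set of points of S¹ having a neighbourhood on which f is constant. -/

import Mathlib

/-- `Con(f)`: points with a neighbourhood on which `f` is constant. -/
def ConSet (f : AddCircle (1 : ℝ) → AddCircle (1 : ℝ)) : Set (AddCircle (1 : ℝ)) :=
  {θ | ∃ U : Set (AddCircle (1 : ℝ)), IsOpen U ∧ θ ∈ U ∧ ∀ ν ∈ U, f ν = f θ}

open Filter Topology Function

/-- If `f` is locally constant at `x` and the forward orbit of `f x` accumulates at `x`, some
`f^[n] (f x)` lands in the neighbourhood where `f` equals `f x`, so `f x` returns to itself. -/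
theorem exists_isPeriodicPt_of_eventuallyEq_of_mem_closure_orbit {X : Type*} [TopologicalSpace X]
    {f : X → X} {x : X} (hconst : ∀ᶠ y in 𝓝 x, f y = f x)
    (hx : x ∈ closure (Set.range fun n : ℕ => f^[n] (f x))) :
    ∃ n : ℕ, IsPeriodicPt f (n + 1) (f x) := by
  obtain ⟨_, hy, n, rfl⟩ := mem_closure_iff_nhds.mp hx _ hconst
  exact ⟨n, by rw [IsPeriodicPt, IsFixedPt, iterate_succ_apply']; exact hy⟩

theorem minimal_set_disjoint_con_general
    (f : AddCircle (1 : ℝ) → AddCircle (1 : ℝ))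
    (hnoper : ¬ ∃ (θ : AddCircle (1 : ℝ)) (n : ℕ), 1 ≤ n ∧ f^[n] θ = θ)
    (P : Set (AddCircle (1 : ℝ)))
    (hPinv : f '' P = P)
    (hPmin : ∀ θ ∈ P, P ⊆ closure (Set.range fun n : ℕ => f^[n] θ)) :
    Disjoint P (ConSet f) := by
  refine Set.disjoint_left.mpr fun θ hθP ⟨U, hU, hθU, hconst⟩ => ?_
  have hfθP : f θ ∈ P := hPinv ▸ Set.mem_image_of_mem f hθP
  obtain ⟨n, hn⟩ := exists_isPeriodicPt_of_eventuallyEq_of_mem_closure_orbit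
    (eventually_of_mem (hU.mem_nhds hθU) hconst) (hPmin (f θ) hfθP hθP)
  exact hnoper ⟨f θ, n + 1, Nat.le_add_left 1 n, hn⟩

theorem minimal_set_disjoint_con
    (f : AddCircle (1 : ℝ) → AddCircle (1 : ℝ)) (hf : Continuous f)
    (hnoper : ¬ ∃ (θ : AddCircle (1 : ℝ)) (n : ℕ), 1 ≤ n ∧ f^[n] θ = θ)
    (P : Set (AddCircle (1 : ℝ))) (hPne : P.Nonempty) (hPcl : IsClosed P)
    (hPinv : f '' P = P)
    (hPmin : ∀ θ ∈ P, P ⊆ closure (Set.range fun n : ℕ => f^[n] θ)) :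
    Disjoint P (ConSet f) :=
  minimal_set_disjoint_con_general f hnoper P hPinv hPmin
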